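/- arXiv:1401.7392 — 11 statements merged into one kernel-verified Lean document; each statement's English description precedes it below -/
import Mathlib

section
/- Let (R, D) be a commutative differential k-algebra of weight λ with a linear operator Π : R → R satisfying D ∘ Π = id. Then the hybrid Rota-Baxter axiom Π(D(x))Π(D(y)) = Π(D(x))y + xΠ(D(y)) − Π(D(xy)) for all x,y holds if and only if both integration-by-parts axioms hold: xΠ(y) = Π(D(x)Π(y)) + Π(xy) + λΠ(D(x)y) and Π(x)y = Π(Π(x)D(y)) + Π(xy) + λΠ(xD(y)) for all x,y ∈ R. -/
/-- for a commutative differential k-algebra (R,D) of weight λ with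
linear Π satisfying D∘Π = id, the hybrid Rota-Baxter axiom holds iff both
integration-by-parts axioms hold. -/
theorem hybrid_rota_baxter_iff_integration_by_parts
    {k R : Type*} [CommRing k] [CommRing R] [Algebra k R] (lam : k)
    (D Pi : R →ₗ[k] R)
    (hLeibniz : ∀ x y : R, D (x * y) = D x * y + x * D y + lam • (D x * D y))
    (hone : D 1 = 0)
    (hsection : ∀ x : R, D (Pi x) = x) :
    (∀ x y : R, Pi (D x) * Pi (D y) =
        Pi (D x) * y + x * Pi (D y) - Pi (D (x * y)))
    ↔ ((∀ x y : R, x * Pi y = Pi (D x * Pi y) + Pi (x * y) + lam • Pi (D x * y)) ∧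
       (∀ x y : R, Pi x * y = Pi (Pi x * D y) + Pi (x * y) + lam • Pi (x * D y))) := by
  constructor
  · intro h
    have key : ∀ x y : R, x * Pi y = Pi (D x * Pi y) + Pi (x * y) + lam • Pi (D x * y) := by
      intro x y
      have h1 := h x (Pi y)
      rw [hsection] at h1
      have h2 : x * Pi y = Pi (D (x * Pi y)) := by linear_combination -h1
      rw [h2, hLeibniz, map_add, map_add, map_smul, hsection]
    refine ⟨key, fun x y => ?_⟩
    have := key (Pi x) y
    rw [hsection] at this
    calc Pi x * y = y * Pi x := mul_comm _ _
    _ = Pi (D y * Pi x) + Pi (y * x) + lam • Pi (D y * x) := key y x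
    _ = Pi (Pi x * D y) + Pi (x * y) + lam • Pi (x * D y) := by
        rw [mul_comm (D y) (Pi x), mul_comm y x, mul_comm (D y) x]
  · rintro ⟨h1, h2⟩ x y
    have a1 := h2 (D x) y
    have a2 := h1 x (D y)
    have a3 := h1 (Pi (D x)) (D y)
    rw [hsection] at a3
    have hD : Pi (D (x * y)) = Pi (D x * y) + Pi (x * D y) + lam • Pi (D x * D y) := by
      rw [hLeibniz, map_add, map_add, map_smul]
    rw [a3, hD]
    simp only [Algebra.smul_def] at a1 a2 ⊢
    linear_combination -a1 - a2
end

section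
/- Let (R, D, Π) be a commutative integro-differential algebra of weight λ. Then Π is a Rota-Baxter operator of weight λ: Π(u)Π(v) = Π(uΠ(v)) + Π(Π(u)v) + λΠ(uv) for all u, v ∈ R. In particular every integro-differential algebra is a differential Rota-Baxter algebra. -/
/-- in a commutative integro-differential algebra (R,D,Π) of weight λ,
Π is a Rota-Baxter operator of weight λ; hence (R,D,Π) is a differential
Rota-Baxter algebra. -/
theorem integro_differential_is_rota_baxter
    {k R : Type*} [CommRing k] [CommRing R] [Algebra k R] (lam : k)
    (D Pi : R →ₗ[k] R)
    (hLeibniz : ∀ x y : R, D (x * y) = D x * y + x * D y + lam • (D x * D y))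
    (hone : D 1 = 0)
    (hsection : ∀ x : R, D (Pi x) = x)
    (hhybrid : ∀ x y : R, Pi (D x) * Pi (D y) =
        Pi (D x) * y + x * Pi (D y) - Pi (D (x * y))) :
    ∀ u v : R, Pi u * Pi v = Pi (u * Pi v) + Pi (Pi u * v) + lam • Pi (u * v) := by
  intro u v
  have h1 := hhybrid (Pi u) (Pi v)
  rw [hsection, hsection] at h1
  have h2 : Pi (D (Pi u * Pi v)) = Pi u * Pi v := by linear_combination h1
  have h3 : D (Pi u * Pi v) = u * Pi v + Pi u * v + lam • (u * v) := by
    rw [hLeibniz, hsection, hsection]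
  rw [h3] at h2
  simp only [map_add, map_smul] at h2
  linear_combination h2.symm
end

section
/- Let (R, D, Π) be a commutative integro-differential algebra of weight λ. Then E := id − Π∘D is a projector (E∘E = E) onto ker D, and E is multiplicative on R: E(xy) = E(x)E(y) for all x, y ∈ R. -/
/-- in a commutative integro-differential algebra (R,D,Π) of weight λ,
the evaluation E := id − Π∘D is an idempotent projector onto ker D, and E is
multiplicative: E(xy) = E(x)E(y). -/
theorem evaluation_projector_multiplicative
    {k R : Type*} [CommRing k] [CommRing R] [Algebra k R] (lam : k)
    (D Pi : R →ₗ[k] R)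
    (hLeibniz : ∀ x y : R, D (x * y) = D x * y + x * D y + lam • (D x * D y))
    (hone : D 1 = 0)
    (hsection : ∀ x : R, D (Pi x) = x)
    (hhybrid : ∀ x y : R, Pi (D x) * Pi (D y) =
        Pi (D x) * y + x * Pi (D y) - Pi (D (x * y)))
    (E : R →ₗ[k] R) (hE : E = LinearMap.id - Pi ∘ₗ D) :
    E ∘ₗ E = E ∧ LinearMap.range E = LinearMap.ker D ∧
      ∀ x y : R, E (x * y) = E x * E y := by
  have hEx : ∀ x : R, E x = x - Pi (D x) := by
    intro x; simp [hE]
  have hDE : ∀ x : R, D (E x) = 0 := by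
    intro x; rw [hEx]; simp [hsection]
  refine ⟨?_, ?_, ?_⟩
  · ext x
    simp only [LinearMap.comp_apply]
    rw [hEx (E x), hDE, map_zero, sub_zero]
  · apply le_antisymm
    · rintro _ ⟨x, rfl⟩
      exact LinearMap.mem_ker.mpr (hDE x)
    · intro x hx
      have hx0 : D x = 0 := hx
      exact ⟨x, by rw [hEx, hx0, map_zero, sub_zero]⟩
  · intro x y
    rw [hEx, hEx, hEx]
    have := hhybrid x y
    linear_combination -this
end

section
/- Let (A, d) be a differential algebra of weight λ with linear maps S, E : A → A such that S is a projector onto im(d) and E is a projector onto ker(d). Then there is a unique linear map Q : A → A with d∘Q∘d = d, Q∘d∘Q = Q, im(Q) = ker(E), and ker(Q) = ker(S). -/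
/-- if (A,d) is a differential algebra of weight λ with projectors
S onto im d and E onto ker d, then there is a unique linear map Q with
d∘Q∘d = d, Q∘d∘Q = Q, im Q = ker E and ker Q = ker S. -/
theorem projectors_give_unique_quasi_antiderivative
    {k A : Type*} [CommRing k] [CommRing A] [Algebra k A] (lam : k)
    (d : A →ₗ[k] A)
    (hLeibniz : ∀ x y : A, d (x * y) = d x * y + x * d y + lam • (d x * d y))
    (hone : d 1 = 0)
    (S E : A →ₗ[k] A)
    (hSproj : S ∘ₗ S = S) (hSrange : LinearMap.range S = LinearMap.range d)
    (hEproj : E ∘ₗ E = E) (hErange : LinearMap.range E = LinearMap.ker d) :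
    ∃! Q : A →ₗ[k] A, d ∘ₗ Q ∘ₗ d = d ∧ Q ∘ₗ d ∘ₗ Q = Q ∧
      LinearMap.range Q = LinearMap.ker E ∧ LinearMap.ker Q = LinearMap.ker S := by
  classical
  set K : Submodule k A := LinearMap.ker E with hKdef
  have hS2 : ∀ x, S (S x) = S x := fun x => LinearMap.ext_iff.mp hSproj x
  have hE2 : ∀ x, E (E x) = E x := fun x => LinearMap.ext_iff.mp hEproj x
  -- E acts as identity on ker d
  have hEid : ∀ y, d y = 0 → E y = y := by
    intro y hy
    have : y ∈ LinearMap.range E := hErange ▸ (LinearMap.mem_ker.mpr hy)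
    obtain ⟨x, rfl⟩ := this
    exact hE2 x
  -- S acts as identity on range d
  have hSid : ∀ y, S (d y) = d y := by
    intro y
    have : d y ∈ LinearMap.range S := hSrange ▸ (LinearMap.mem_range_self d y)
    obtain ⟨x, hx⟩ := this
    rw [← hx, hS2]
  -- d injective on K = ker E
  have hdK : ∀ z ∈ K, d z = 0 → z = 0 := by
    intro z hz hdz
    have := hEid z hdz
    rw [LinearMap.mem_ker.mp hz] at this
    exact this.symm
  set f : K →ₗ[k] A := d ∘ₗ K.subtype with hfdef
  have hfinj : Function.Injective f := by
    rw [← LinearMap.ker_eq_bot, LinearMap.ker_eq_bot']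
    intro z hz
    exact Subtype.ext (hdK z z.2 hz)
  have hranf : LinearMap.range f = LinearMap.range d := by
    apply le_antisymm
    · rintro _ ⟨⟨a, ha⟩, rfl⟩
      exact LinearMap.mem_range_self d a
    · rintro _ ⟨x, rfl⟩
      have hxE : x - E x ∈ K := by
        simp [hKdef, LinearMap.mem_ker, map_sub, hE2]
      have hdE : d (E x) = 0 := by
        have : E x ∈ LinearMap.range E := LinearMap.mem_range_self E x
        exact LinearMap.mem_ker.mp (hErange ▸ this)
      exact ⟨⟨x - E x, hxE⟩, by simp [hfdef, map_sub, hdE]⟩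
  set e : K ≃ₗ[k] LinearMap.range f := LinearEquiv.ofInjective f hfinj with hedef
  have hSmem : ∀ x, S x ∈ LinearMap.range f := by
    intro x
    rw [hranf, ← hSrange]
    exact LinearMap.mem_range_self S x
  set S' : A →ₗ[k] LinearMap.range f := S.codRestrict _ hSmem with hS'def
  set Q : A →ₗ[k] A := K.subtype ∘ₗ (e.symm.toLinearMap ∘ₗ S') with hQdef
  have hQapp : ∀ x, Q x = (e.symm (S' x) : A) := fun x => rfl
  have hcoe : ∀ z : K, (e z : A) = d z := fun z => rfl
  -- d (Q x) = S x
  have hdQ : ∀ x, d (Q x) = S x := by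
    intro x
    have h1 : d (Q x) = (e (e.symm (S' x)) : A) := (hcoe _).symm
    rw [h1, e.apply_symm_apply]
    rfl
  have hQS : ∀ x, Q (S x) = Q x := by
    intro x
    simp only [hQapp, hS'def]
    congr 1
    congr 1
    exact Subtype.ext (by simpa using hS2 x)
  have hQd : ∀ z : A, z ∈ K → Q (d z) = z := by
    intro z hz
    have hS'dz : S' (d z) = e ⟨z, hz⟩ := by
      apply Subtype.ext
      simp only [hS'def, LinearMap.codRestrict_apply]
      rw [hcoe]
      exact hSid z
    rw [hQapp, hS'dz, e.symm_apply_apply]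
  refine ⟨Q, ⟨?_, ?_, ?_, ?_⟩, ?_⟩
  · ext x
    simp only [LinearMap.comp_apply]
    rw [hdQ, hSid]
  · ext x
    simp only [LinearMap.comp_apply]
    rw [hdQ, hQS]
  · apply le_antisymm
    · rintro _ ⟨x, rfl⟩
      exact (e.symm (S' x)).2
    · intro z hz
      exact ⟨d z, hQd z hz⟩
  · ext x
    simp only [LinearMap.mem_ker]
    constructor
    · intro hx
      have : (e.symm (S' x) : A) = 0 := hx
      have h0 : e.symm (S' x) = 0 := Subtype.ext this
      have h1 : S' x = 0 := by
        have := congrArg e h0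
        rwa [e.apply_symm_apply, map_zero] at this
      have h2 : (S' x : A) = 0 := by rw [h1]; rfl
      exact h2
    · intro hx
      rw [hQapp]
      have h1 : S' x = 0 := Subtype.ext hx
      rw [h1, map_zero]
      rfl
  · rintro Q' ⟨hdQd', _, hran', hker'⟩
    ext x
    -- x = S x + (x - S x), with x - S x ∈ ker S
    have hxS : x - S x ∈ LinearMap.ker S := by
      simp [LinearMap.mem_ker, map_sub, hS2]
    have hQ'x : Q' x = Q' (S x) := by
      have : Q' (x - S x) = 0 := LinearMap.mem_ker.mp (hker' ▸ hxS)
      have := sub_eq_zero.mp (by rw [map_sub] at this; exact this)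
      exact this
    have hQx : Q x = Q (S x) := (hQS x).symm
    rw [hQ'x, hQx]
    -- S x ∈ range d
    obtain ⟨y, hy⟩ := hSrange ▸ LinearMap.mem_range_self S x
    rw [← hy]
    -- both Q' (d y) and Q (d y) lie in K and have equal image under d
    have h1 : Q' (d y) ∈ K := hran' ▸ LinearMap.mem_range_self Q' (d y)
    have h2 : Q (d y) ∈ K := (e.symm (S' (d y))).2
    have hd1 : d (Q' (d y)) = d y := LinearMap.ext_iff.mp hdQd' y
    have hd2 : d (Q (d y)) = d y := by rw [hdQ, hSid]
    have hsub : Q' (d y) - Q (d y) = 0 := by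
      apply hdK _ (K.sub_mem h1 h2)
      rw [map_sub, hd1, hd2, sub_self]
    exact sub_eq_zero.mp hsub
end

section
/- Let Y be a set with a map d₀ : Y → k[Y] into the commutative polynomial algebra. Define d on a monomial w = u₁⋯u_k (u_i ∈ Y) recursively by d(w) = d₀(u₁)u₂⋯u_k + u₁ d(u₂⋯u_k) + λ d₀(u₁) d(u₂⋯u_k), set d(1) = 0, and extend linearly. Then (k[Y], d) is a differential algebra of weight λ, i.e., d(fg) = d(f)g + f d(g) + λ d(f)d(g) for all f, g ∈ k[Y]. -/
open MvPolynomial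

/-!
For fixed `f`, the weighted Leibniz rule `d (f * g) = d f * g + f * d g + λ • (d f * d g)` is
linear in `g`, and the elements `f` obeying it against every `g` form a subalgebra: closure under
products is the usual expansion of `d (f₁ * (f₂ * g))`, and `d 1 = 0` puts the scalars in.
The recursion says exactly that each variable `X u` obeys the rule against monomials, hence
against everything; as the variables generate `k[Y]`, every polynomial obeys it.
-/

section WeightedLeibniz

variable {k A : Type*} [CommSemiring k] [CommSemiring A] [Algebra k A]

def IsWeightedLeibnizAt (lam : k) (d : A →ₗ[k] A) (f : A) : Prop :=
  ∀ g, d (f * g) = d f * g + f * d g + lam • (d f * d g)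

namespace IsWeightedLeibnizAt

variable {lam : k} {d : A →ₗ[k] A}

theorem add {f₁ f₂ : A} (h₁ : IsWeightedLeibnizAt lam d f₁) (h₂ : IsWeightedLeibnizAt lam d f₂) :
    IsWeightedLeibnizAt lam d (f₁ + f₂) := by
  intro g
  simp only [add_mul, map_add, h₁ g, h₂ g, smul_add]
  ring

theorem mul {f₁ f₂ : A} (h₁ : IsWeightedLeibnizAt lam d f₁) (h₂ : IsWeightedLeibnizAt lam d f₂) :
    IsWeightedLeibnizAt lam d (f₁ * f₂) := by
  intro g
  rw [mul_assoc, h₁, h₂, h₁ f₂]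
  simp only [Algebra.smul_def]
  ring

end IsWeightedLeibnizAt

theorem isWeightedLeibnizAt_algebraMap {lam : k} {d : A →ₗ[k] A} (hone : d 1 = 0) (a : k) :
    IsWeightedLeibnizAt lam d (algebraMap k A a) := by
  have hd : d (algebraMap k A a) = 0 := by
    rw [Algebra.algebraMap_eq_smul_one, map_smul, hone, smul_zero]
  intro g
  rw [hd, ← Algebra.smul_def, map_smul, Algebra.smul_def]
  simp

def weightedLeibnizSubalgebra (lam : k) (d : A →ₗ[k] A) (hone : d 1 = 0) : Subalgebra k A where
  carrier := {f | IsWeightedLeibnizAt lam d f}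
  mul_mem' := IsWeightedLeibnizAt.mul
  add_mem' := IsWeightedLeibnizAt.add
  algebraMap_mem' := isWeightedLeibnizAt_algebraMap hone

end WeightedLeibniz

namespace MvPolynomial

variable {k σ : Type*} [CommSemiring k]

theorem isWeightedLeibnizAt_of_monomial {lam : k} {d : MvPolynomial σ k →ₗ[k] MvPolynomial σ k}
    {f : MvPolynomial σ k}
    (h : ∀ s, d (f * monomial s 1) =
      d f * monomial s 1 + f * d (monomial s 1) + lam • (d f * d (monomial s 1))) :
    IsWeightedLeibnizAt lam d f := by
  intro g
  induction g using MvPolynomial.induction_on' with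
  | monomial s a =>
    rw [show monomial s a = a • monomial s (1 : k) by rw [smul_monomial, smul_eq_mul, mul_one], mul_smul_comm, map_smul, h, map_smul]
    simp only [Algebra.smul_def]
    ring
  | add p q hp hq =>
    simp only [mul_add, map_add, hp, hq, smul_add]
    ring

theorem weightedLeibnizSubalgebra_eq_top {lam : k} {d : MvPolynomial σ k →ₗ[k] MvPolynomial σ k}
    (hone : d 1 = 0) (hX : ∀ u, IsWeightedLeibnizAt lam d (X u)) :
    weightedLeibnizSubalgebra lam d hone = ⊤ :=
  top_le_iff.1 <| adjoin_range_X (R := k) ▸ Algebra.adjoin_le (Set.range_subset_iff.2 hX)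

end MvPolynomial

/-- given d₀ : Y → k[Y], the linear map d on k[Y] defined on
monomials by the recursion d(u₁⋯u_k) = d₀(u₁)u₂⋯u_k + u₁d(u₂⋯u_k)
+ λd₀(u₁)d(u₂⋯u_k) and d(1) = 0 makes (k[Y], d) a differential algebra of
weight λ. -/
theorem recursive_extension_is_weighted_derivation
    {k Y : Type*} [CommRing k] (lam : k)
    (d0 : Y → MvPolynomial Y k) (d : MvPolynomial Y k →ₗ[k] MvPolynomial Y k)
    (hone : d 1 = 0)
    (hrec : ∀ (u : Y) (s : Y →₀ ℕ),
      d (X u * monomial s 1) =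
        d0 u * monomial s 1 + X u * d (monomial s 1)
          + lam • (d0 u * d (monomial s 1))) :
    ∀ f g : MvPolynomial Y k,
      d (f * g) = d f * g + f * d g + lam • (d f * d g) := by
  have hdX : ∀ u, d (X u) = d0 u := fun u => by
    simpa [hone] using hrec u 0
  have hX : ∀ u, IsWeightedLeibnizAt lam d (X u) := fun u =>
    isWeightedLeibnizAt_of_monomial fun s => by rw [hdX, hrec]
  intro f
  have hf : f ∈ weightedLeibnizSubalgebra lam d hone := by
    rw [weightedLeibnizSubalgebra_eq_top hone hX]
    trivial
  exact hf
end

section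
/- For a commutative monoid monomial w = u₁⋯u_k with u_i ∈ Y, the derivation d of weight λ on k[Y] extending d₀ : Y → k[Y] satisfies the closed formula d(w) = Σ_{∅ ≠ I ⊆ {1,…,k}} λ^{|I|−1} v₁⋯v_k, where v_i = d₀(u_i) if i ∈ I and v_i = u_i otherwise. -/
/-!
Write `W(s)` for the right-hand side over an index set `s`, with `aᵢ = d₀(uᵢ)` and `bᵢ = uᵢ`.
Sorting the subsets of `s ∪ {j}` by whether they contain `j` gives
`W(s ∪ {j}) = b_j W(s) + a_j Σ_{I ⊆ s} λ^{|I|} ∏ vᵢ`, and splitting off `I = ∅` turns the last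
sum into `∏ bᵢ + λ W(s)`. This is the recursion `d(u w) = d₀(u) w + u d(w) + λ d₀(u) d(w)`
defining `d`, so `d(∏ uᵢ) = W` by induction on the monomial.
-/

open MvPolynomial

open Finset in
def weightedLeibnizSum {ι R A : Type*} [DecidableEq ι] [CommSemiring R] [CommSemiring A]
    [Algebra R A] (lam : R) (a b : ι → A) (s : Finset ι) : A :=
  ∑ I ∈ s.powerset.filter (fun I => I.Nonempty),
    lam ^ (#I - 1) • ∏ i ∈ s, if i ∈ I then a i else b i

section weightedLeibnizSum

open Finset

variable {ι R A : Type*} [DecidableEq ι] [CommSemiring R] [CommSemiring A] [Algebra R A]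
  (lam : R) (a b : ι → A)

@[simp]
theorem weightedLeibnizSum_empty : weightedLeibnizSum lam a b ∅ = 0 := by
  simp [weightedLeibnizSum, filter_singleton]

theorem sum_powerset_eq_prod_add_smul_weightedLeibnizSum (s : Finset ι) :
    ∑ I ∈ s.powerset, lam ^ #I • ∏ i ∈ s, (if i ∈ I then a i else b i) =
      ∏ i ∈ s, b i + lam • weightedLeibnizSum lam a b s := by
  have hne : s.powerset.filter (fun I => I.Nonempty) = s.powerset.erase ∅ := by
    simp only [nonempty_iff_ne_empty, filter_ne']
  rw [weightedLeibnizSum, hne, ← add_sum_erase _ _ (empty_mem_powerset s), smul_sum]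
  congr 1
  · simp
  · refine sum_congr rfl fun I hI => ?_
    have hI : #I = #I - 1 + 1 :=
      (Nat.sub_add_cancel (card_pos.2 (nonempty_iff_ne_empty.2 (ne_of_mem_erase hI)))).symm
    rw [← smul_assoc, smul_eq_mul, ← pow_succ', ← hI]

theorem weightedLeibnizSum_insert {j : ι} {s : Finset ι} (hj : j ∉ s) :
    weightedLeibnizSum lam a b (insert j s) =
      b j * weightedLeibnizSum lam a b s +
        a j * (∏ i ∈ s, b i + lam • weightedLeibnizSum lam a b s) := by
  have hnotin {I : Finset ι} (hI : I ∈ s.powerset) : j ∉ I := fun h => hj (mem_powerset.1 hI h)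
  have without_j : ∑ I ∈ s.powerset, (if I.Nonempty then
        lam ^ (#I - 1) • ∏ i ∈ insert j s, (if i ∈ I then a i else b i) else 0) =
      b j * weightedLeibnizSum lam a b s := by
    rw [weightedLeibnizSum, sum_filter, mul_sum]
    refine sum_congr rfl fun I hI => ?_
    rw [prod_insert hj, if_neg (hnotin hI)]
    split_ifs
    · exact (mul_smul_comm _ _ _).symm
    · exact (mul_zero _).symm
  have with_j : ∑ I ∈ s.powerset, (if (insert j I).Nonempty then
        lam ^ (#(insert j I) - 1) • ∏ i ∈ insert j s, (if i ∈ insert j I then a i else b i)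
        else 0) =
      a j * (∏ i ∈ s, b i + lam • weightedLeibnizSum lam a b s) := by
    rw [← sum_powerset_eq_prod_add_smul_weightedLeibnizSum, mul_sum]
    refine sum_congr rfl fun I hI => ?_
    have hs : ∀ i ∈ s, i ∈ insert j I ↔ i ∈ I := fun i hi =>
      ⟨fun h => (mem_insert.1 h).resolve_left (ne_of_mem_of_not_mem hi hj), mem_insert_of_mem⟩
    rw [if_pos (insert_nonempty _ _), card_insert_of_notMem (hnotin hI), Nat.add_sub_cancel,
      prod_insert hj, if_pos (mem_insert_self _ _), mul_smul_comm]
    congr 2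
    exact prod_congr rfl fun i hi => if_congr (hs i hi) rfl rfl
  rw [weightedLeibnizSum, sum_filter, sum_powerset_insert hj, without_j, with_j]

end weightedLeibnizSum

theorem apply_prod_X_eq_weightedLeibnizSum {ι σ k : Type*} [DecidableEq ι] [CommSemiring k]
    (lam : k) (d0 : σ → MvPolynomial σ k) (d : MvPolynomial σ k → MvPolynomial σ k)
    (hone : d 1 = 0)
    (hrec : ∀ (v : σ) (m : σ →₀ ℕ),
      d (X v * monomial m 1) =
        d0 v * monomial m 1 + X v * d (monomial m 1) + lam • (d0 v * d (monomial m 1)))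
    (u : ι → σ) (s : Finset ι) :
    d (∏ i ∈ s, X (u i)) = weightedLeibnizSum lam (fun i => d0 (u i)) (fun i => X (u i)) s := by
  induction s using Finset.induction_on with
  | empty => simpa using hone
  | insert j s hj ih =>
    have hmonomial : ∏ i ∈ s, X (u i) = monomial (∑ i ∈ s, Finsupp.single (u i) 1) (1 : k) := by
      rw [monomial_sum_one]
      rfl
    rw [Finset.prod_insert hj, hmonomial, hrec, ← hmonomial, ih,
      weightedLeibnizSum_insert _ _ _ hj, mul_add, mul_smul_comm]
    abel

/-- the weight-λ derivation d on k[Y] extending d₀ satisfies the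
closed formula d(u₁⋯u_k) = Σ_{∅≠I⊆{1,…,k}} λ^{|I|−1} v₁⋯v_k where
v_i = d₀(u_i) for i ∈ I and v_i = u_i otherwise. -/
theorem weighted_derivation_closed_formula
    {k Y : Type*} [CommRing k] (lam : k)
    (d0 : Y → MvPolynomial Y k) (d : MvPolynomial Y k →ₗ[k] MvPolynomial Y k)
    (hone : d 1 = 0)
    (hrec : ∀ (u : Y) (s : Y →₀ ℕ),
      d (X u * monomial s 1) =
        d0 u * monomial s 1 + X u * d (monomial s 1)
          + lam • (d0 u * d (monomial s 1))) :
    ∀ (n : ℕ) (u : Fin n → Y),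
      d (∏ i, X (u i)) =
        ∑ I ∈ (Finset.univ : Finset (Fin n)).powerset.filter
            (fun I => I.Nonempty),
          lam ^ (I.card - 1) •
            ∏ i, (if i ∈ I then d0 (u i) else X (u i)) :=
  fun _ u => apply_prod_X_eq_weightedLeibnizSum lam d0 d hone hrec u Finset.univ
end

section
/- Let A be a commutative k-algebra and Ш(A) = ⊕_{k≥0} A^{⊗(k+1)} with the mixable shuffle product of weight λ, and let P_A be the linear operator sending x₀⊗⋯⊗x_n to 1⊗x₀⊗⋯⊗x_n. Then P_A is a Rota-Baxter operator of weight λ on Ш(A): P_A(𝔞)·P_A(𝔟) = P_A(𝔞·P_A(𝔟)) + P_A(P_A(𝔞)·𝔟) + λ P_A(𝔞·𝔟) for all 𝔞, 𝔟 ∈ Ш(A). -/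
open scoped TensorProduct DirectSum
open PiTensorProduct

/-- The underlying k-module of the mixable shuffle algebra
Ш(A) = ⊕_{m≥0} A^{⊗(m+1)}. -/
abbrev MixShuffle (k A : Type*) [CommRing k] [CommRing A] [Algebra k A] :=
  ⨁ m : ℕ, ⨂[k] (_ : Fin (m + 1)), A

/-- The pure tensor a₀ ⊗ ⋯ ⊗ a_m in the depth-(m+1) component of Ш(A). -/
noncomputable def mixTensor {k A : Type*} [CommRing k] [CommRing A] [Algebra k A]
    (m : ℕ) (f : Fin (m + 1) → A) : MixShuffle k A :=
  DirectSum.of (fun m => ⨂[k] (_ : Fin (m + 1)), A) m (tprod k f)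

/-- on Ш(A) with the mixable shuffle product ⋄ of weight λ, the
operator P_A : x₀⊗⋯⊗x_n ↦ 1⊗x₀⊗⋯⊗x_n is a Rota-Baxter operator of weight λ.
Here `mul` is the mixable shuffle product (characterized by its defining
recursion on pure tensors) and `L c` is left concatenation by c, so that
P_A = L 1. -/
theorem mixable_shuffle_P_is_rota_baxter
    {k A : Type*} [CommRing k] [CommRing A] [Algebra k A] (lam : k)
    (mul : MixShuffle k A →ₗ[k] MixShuffle k A →ₗ[k] MixShuffle k A)
    (L : A → MixShuffle k A →ₗ[k] MixShuffle k A)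
    (hL : ∀ (c : A) (m : ℕ) (f : Fin (m + 1) → A),
      L c (mixTensor m f) = mixTensor (m + 1) (Fin.cons c f))
    (h0n : ∀ (a0 : A) (n : ℕ) (b : Fin (n + 1) → A),
      mul (mixTensor 0 fun _ => a0) (mixTensor n b) =
        mixTensor n (Function.update b 0 (a0 * b 0)))
    (hm0 : ∀ (m : ℕ) (a : Fin (m + 1) → A) (b0 : A),
      mul (mixTensor m a) (mixTensor 0 fun _ => b0) =
        mixTensor m (Function.update a 0 (a 0 * b0)))
    (hmn : ∀ (m n : ℕ) (a : Fin (m + 2) → A) (b : Fin (n + 2) → A),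
      mul (mixTensor (m + 1) a) (mixTensor (n + 1) b) =
        L (a 0 * b 0)
          (mul (mixTensor m (Fin.tail a))
              (mixTensor (n + 1) (Fin.cons 1 (Fin.tail b)))
            + mul (mixTensor (m + 1) (Fin.cons 1 (Fin.tail a)))
                (mixTensor n (Fin.tail b))
            + lam • mul (mixTensor m (Fin.tail a)) (mixTensor n (Fin.tail b)))) :
    ∀ x y : MixShuffle k A,
      mul (L 1 x) (L 1 y) =
        L 1 (mul x (L 1 y)) + L 1 (mul (L 1 x) y) + lam • L 1 (mul x y) := by

  have key : ∀ (m : ℕ) (f : Fin (m+1) → A) (n : ℕ) (g : Fin (n+1) → A),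
      mul (L 1 (mixTensor m f)) (L 1 (mixTensor n g)) =
        L 1 (mul (mixTensor m f) (L 1 (mixTensor n g))) +
        L 1 (mul (L 1 (mixTensor m f)) (mixTensor n g)) +
        lam • L 1 (mul (mixTensor m f) (mixTensor n g)) := by
    intro m f n g
    rw [hL, hL, hmn]
    simp [Fin.tail_cons, one_mul, map_add, map_smul]
  have key2 : ∀ (x : MixShuffle k A) (n : ℕ) (g : Fin (n+1) → A),
      mul (L 1 x) (L 1 (mixTensor n g)) =
        L 1 (mul x (L 1 (mixTensor n g))) +
        L 1 (mul (L 1 x) (mixTensor n g)) +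
        lam • L 1 (mul x (mixTensor n g)) := by
    intro x
    induction x using DirectSum.induction_on with
    | zero => intro n g; simp
    | of m xm =>
        induction xm using PiTensorProduct.induction_on with
        | smul_tprod r f =>
            intro n g
            have : (DirectSum.of (fun m => ⨂[k] (_ : Fin (m + 1)), A) m (r • tprod k f))
                = r • mixTensor m f := by
              rw [← DirectSum.lof_eq_of k, map_smul, DirectSum.lof_eq_of]; rfl
            rw [this]
            simp only [map_smul, LinearMap.smul_apply, key m f n g, smul_add,
              smul_comm lam r]
        | add u v hu hv =>
            intro n g
            have : (DirectSum.of (fun m => ⨂[k] (_ : Fin (m + 1)), A) m (u + v))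
                = DirectSum.of (fun m => ⨂[k] (_ : Fin (m + 1)), A) m u
                  + DirectSum.of (fun m => ⨂[k] (_ : Fin (m + 1)), A) m v := by
              rw [map_add]
            rw [this]
            simp only [map_add, LinearMap.add_apply, hu n g, hv n g, smul_add]
            abel
    | add u v hu hv =>
        intro n g
        simp only [map_add, LinearMap.add_apply, hu n g, hv n g, smul_add]
        abel
  intro x y
  induction y using DirectSum.induction_on with
  | zero => simp
  | of n ym =>
      induction ym using PiTensorProduct.induction_on with
      | smul_tprod r g =>
          have : (DirectSum.of (fun m => ⨂[k] (_ : Fin (m + 1)), A) n (r • tprod k g))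
              = r • mixTensor n g := by
            rw [← DirectSum.lof_eq_of k, map_smul, DirectSum.lof_eq_of]; rfl
          rw [this]
          simp only [map_smul, LinearMap.smul_apply, key2 x n g, smul_add,
            smul_comm lam r]
      | add u v hu hv =>
          have : (DirectSum.of (fun m => ⨂[k] (_ : Fin (m + 1)), A) n (u + v))
              = DirectSum.of (fun m => ⨂[k] (_ : Fin (m + 1)), A) n u
                + DirectSum.of (fun m => ⨂[k] (_ : Fin (m + 1)), A) n v := by
            rw [map_add]
          rw [this]
          simp only [map_add, LinearMap.add_apply, hu, hv, smul_add]
          abel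
  | add u v hu hv =>
      simp only [map_add, LinearMap.add_apply, hu, hv, smul_add]
      abel
end

section
/- The mixable shuffle algebra Ш(A) of weight λ over a commutative k-algebra A is a commutative associative unital k-algebra. -/
open scoped TensorProduct DirectSum
open PiTensorProduct

set_option maxHeartbeats 1600000 in
/-- the mixable shuffle algebra Ш(A) of weight λ over a commutative
k-algebra A (with the product ⋄ given by the defining recursion on pure tensors,
`L c` being left concatenation by c) is a commutative associative unital
k-algebra, with unit the pure tensor 1 ∈ A of depth 1. -/
theorem mixable_shuffle_comm_assoc_unital
    {k A : Type*} [CommRing k] [CommRing A] [Algebra k A] (lam : k)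
    (mul : MixShuffle k A →ₗ[k] MixShuffle k A →ₗ[k] MixShuffle k A)
    (L : A → MixShuffle k A →ₗ[k] MixShuffle k A)
    (hL : ∀ (c : A) (m : ℕ) (f : Fin (m + 1) → A),
      L c (mixTensor m f) = mixTensor (m + 1) (Fin.cons c f))
    (h0n : ∀ (a0 : A) (n : ℕ) (b : Fin (n + 1) → A),
      mul (mixTensor 0 fun _ => a0) (mixTensor n b) =
        mixTensor n (Function.update b 0 (a0 * b 0)))
    (hm0 : ∀ (m : ℕ) (a : Fin (m + 1) → A) (b0 : A),
      mul (mixTensor m a) (mixTensor 0 fun _ => b0) =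
        mixTensor m (Function.update a 0 (a 0 * b0)))
    (hmn : ∀ (m n : ℕ) (a : Fin (m + 2) → A) (b : Fin (n + 2) → A),
      mul (mixTensor (m + 1) a) (mixTensor (n + 1) b) =
        L (a 0 * b 0)
          (mul (mixTensor m (Fin.tail a))
              (mixTensor (n + 1) (Fin.cons 1 (Fin.tail b)))
            + mul (mixTensor (m + 1) (Fin.cons 1 (Fin.tail a)))
                (mixTensor n (Fin.tail b))
            + lam • mul (mixTensor m (Fin.tail a)) (mixTensor n (Fin.tail b)))) :
    (∀ x y : MixShuffle k A, mul x y = mul y x) ∧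
    (∀ x y z : MixShuffle k A, mul (mul x y) z = mul x (mul y z)) ∧
    (∀ x : MixShuffle k A,
      mul (mixTensor 0 fun _ => (1 : A)) x = x ∧
      mul x (mixTensor 0 fun _ => (1 : A)) = x) := by
  classical
  set ST : Set (MixShuffle k A) :=
    Set.range (fun p : (Σ m : ℕ, Fin (m + 1) → A) => mixTensor p.1 p.2) with hSTdef
  have hpure : ∀ (m : ℕ) (f : Fin (m + 1) → A), mixTensor m f ∈ ST :=
    fun m f => ⟨⟨m, f⟩, rfl⟩
  have hST : Submodule.span k ST = ⊤ := by
    rw [Submodule.eq_top_iff']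
    intro x
    induction x using DirectSum.induction_on with
    | zero => exact Submodule.zero_mem _
    | of m t =>
      induction t using PiTensorProduct.induction_on with
      | smul_tprod r f =>
        rw [← DirectSum.lof_eq_of k, map_smul, DirectSum.lof_eq_of]
        exact Submodule.smul_mem _ r (Submodule.subset_span (hpure m f))
      | add x y hx hy =>
        rw [map_add]
        exact Submodule.add_mem _ hx hy
    | add x y hx hy => exact Submodule.add_mem _ hx hy
  -- extensionality for linear maps on MixShuffle
  have lin_ext : ∀ {P : Type _} [AddCommGroup P] [Module k P]
      (F G : MixShuffle k A →ₗ[k] P),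
      (∀ (m : ℕ) (f : Fin (m + 1) → A), F (mixTensor m f) = G (mixTensor m f)) →
      F = G := by
    intro P _ _ F G h
    apply LinearMap.ext_on hST
    rintro x ⟨⟨m, f⟩, rfl⟩
    exact h m f
  -- helpers about depth-one tuples
  have fconst : ∀ (f : Fin (0 + 1) → A), f = fun _ => f 0 :=
    fun f => funext fun i => congrArg f (@Subsingleton.elim (Fin 1) _ i 0)
  have mul00 : ∀ x y : A,
      mul (mixTensor 0 fun _ => x) (mixTensor 0 fun _ => y)
        = mixTensor 0 (fun _ => x * y) := by
    intro x y
    rw [h0n]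
    refine congrArg (mixTensor 0) ?_
    funext i
    rw [@Subsingleton.elim (Fin 1) _ i 0, Function.update_self]
  -- concatenation lemmas, extended to arbitrary arguments
  have lem0L : ∀ (a0 e : A) (s : MixShuffle k A),
      mul (mixTensor 0 fun _ => a0) (L e s) = L (a0 * e) s := by
    intro a0 e s
    have h : (mul (mixTensor 0 fun _ => a0)).comp (L e) = L (a0 * e) := by
      apply lin_ext
      intro m f
      simp only [LinearMap.comp_apply, hL, h0n, Fin.cons_zero, Fin.update_cons_zero]
    exact LinearMap.congr_fun h s
  have lem0R : ∀ (e b0 : A) (s : MixShuffle k A),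
      mul (L e s) (mixTensor 0 fun _ => b0) = L (e * b0) s := by
    intro e b0 s
    have h : (mul.flip (mixTensor 0 fun _ => b0)).comp (L e) = L (e * b0) := by
      apply lin_ext
      intro m f
      simp only [LinearMap.comp_apply, LinearMap.flip_apply, hL, hm0,
        Fin.cons_zero, Fin.update_cons_zero]
    exact LinearMap.congr_fun h s
  have lemL : ∀ (d : A) (p : ℕ) (c : Fin (p + 2) → A) (s : MixShuffle k A),
      mul (L d s) (mixTensor (p + 1) c) =
        L (d * c 0) (mul s (mixTensor (p + 1) (Fin.cons 1 (Fin.tail c)))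
          + mul (L 1 s) (mixTensor p (Fin.tail c))
          + lam • mul s (mixTensor p (Fin.tail c))) := by
    intro d p c s
    have h : (mul.flip (mixTensor (p + 1) c)).comp (L d) =
        (L (d * c 0)).comp
          ((mul.flip (mixTensor (p + 1) (Fin.cons 1 (Fin.tail c))))
            + (mul.flip (mixTensor p (Fin.tail c))).comp (L 1)
            + lam • (mul.flip (mixTensor p (Fin.tail c)))) := by
      apply lin_ext
      intro m f
      simp only [LinearMap.comp_apply, LinearMap.add_apply, LinearMap.smul_apply,
        LinearMap.flip_apply, hL]
      rw [hmn]
      simp only [Fin.cons_zero, Fin.tail_cons]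
    exact LinearMap.congr_fun h s
  have lemR : ∀ (p : ℕ) (c : Fin (p + 2) → A) (d : A) (s : MixShuffle k A),
      mul (mixTensor (p + 1) c) (L d s) =
        L (c 0 * d) (mul (mixTensor p (Fin.tail c)) (L 1 s)
          + mul (mixTensor (p + 1) (Fin.cons 1 (Fin.tail c))) s
          + lam • mul (mixTensor p (Fin.tail c)) s) := by
    intro p c d s
    have h : (mul (mixTensor (p + 1) c)).comp (L d) =
        (L (c 0 * d)).comp
          ((mul (mixTensor p (Fin.tail c))).comp (L 1)
            + (mul (mixTensor (p + 1) (Fin.cons 1 (Fin.tail c))))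
            + lam • (mul (mixTensor p (Fin.tail c)))) := by
      apply lin_ext
      intro m f
      simp only [LinearMap.comp_apply, LinearMap.add_apply, LinearMap.smul_apply, hL]
      rw [hmn]
      simp only [Fin.cons_zero, Fin.tail_cons]
    exact LinearMap.congr_fun h s
  have lemOne : ∀ (m n : ℕ) (x : Fin (m + 1) → A) (y : Fin (n + 1) → A),
      L 1 (mul (mixTensor m x) (mixTensor (n + 1) (Fin.cons 1 y))
          + mul (mixTensor (m + 1) (Fin.cons 1 x)) (mixTensor n y)
          + lam • mul (mixTensor m x) (mixTensor n y))
        = mul (mixTensor (m + 1) (Fin.cons 1 x)) (mixTensor (n + 1) (Fin.cons 1 y)) := by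
    intro m n x y
    rw [hmn]
    simp only [Fin.cons_zero, Fin.tail_cons, one_mul]
  -- commutativity on pure tensors
  have base0 : ∀ (n : ℕ) (a0 : A) (b : Fin (n + 1) → A),
      mul (mixTensor 0 fun _ => a0) (mixTensor n b)
        = mul (mixTensor n b) (mixTensor 0 fun _ => a0) := by
    intro n a0 b
    rw [h0n, hm0, mul_comm]
  have commKey : ∀ (N m n : ℕ), m + n ≤ N →
      ∀ (a : Fin (m + 1) → A) (b : Fin (n + 1) → A),
      mul (mixTensor m a) (mixTensor n b) = mul (mixTensor n b) (mixTensor m a) := by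
    intro N
    induction N with
    | zero =>
      intro m n h a b
      obtain rfl : m = 0 := by omega
      rw [fconst a, base0]
    | succ N ih =>
      intro m n h a b
      rcases m with _ | m
      · rw [fconst a, base0]
      rcases n with _ | n
      · rw [fconst b, ← base0]
      rw [hmn, hmn,
        ih m (n + 1) (by omega) (Fin.tail a) (Fin.cons 1 (Fin.tail b)),
        ih (m + 1) n (by omega) (Fin.cons 1 (Fin.tail a)) (Fin.tail b),
        ih m n (by omega) (Fin.tail a) (Fin.tail b),
        mul_comm (a 0) (b 0)]
      congr 1
      abel
  -- associativity on pure tensors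
  have assoc00p : ∀ (a0 b0 : A) (p : ℕ) (c : Fin (p + 1) → A),
      mul (mul (mixTensor 0 fun _ => a0) (mixTensor 0 fun _ => b0)) (mixTensor p c)
        = mul (mixTensor 0 fun _ => a0) (mul (mixTensor 0 fun _ => b0) (mixTensor p c)) := by
    intro a0 b0 p c
    rw [mul00, h0n (a0 * b0) p c, h0n b0 p c,
      h0n a0 p (Function.update c 0 (b0 * c 0)),
      Function.update_self, Function.update_idem, mul_assoc]
  have assocKey : ∀ (N m n p : ℕ), m + n + p ≤ N →
      ∀ (a : Fin (m + 1) → A) (b : Fin (n + 1) → A) (c : Fin (p + 1) → A),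
      mul (mul (mixTensor m a) (mixTensor n b)) (mixTensor p c)
        = mul (mixTensor m a) (mul (mixTensor n b) (mixTensor p c)) := by
    intro N
    induction N with
    | zero =>
      intro m n p h a b c
      obtain rfl : m = 0 := by omega
      obtain rfl : n = 0 := by omega
      rw [fconst a, fconst b]
      exact assoc00p _ _ _ _
    | succ N ih =>
      intro m n p h a b c
      rcases m with _ | m
      · -- m = 0
        rw [fconst a]
        rcases n with _ | n
        · rw [fconst b]
          exact assoc00p _ _ _ _
        rcases p with _ | p
        · -- (0, n+1, 0)
          rw [fconst c,
            h0n (a 0) (n + 1) b,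
            hm0 (n + 1) (Function.update b 0 (a 0 * b 0)) (c 0),
            hm0 (n + 1) b (c 0),
            h0n (a 0) (n + 1) (Function.update b 0 (b 0 * c 0)),
            Function.update_self, Function.update_self,
            Function.update_idem, Function.update_idem, mul_assoc]
        · -- (0, n+1, p+1)
          rw [h0n (a 0) (n + 1) b,
            hmn n p (Function.update b 0 (a 0 * b 0)) c,
            hmn n p b c, lem0L,
            Function.update_self, Fin.tail_update_zero, mul_assoc]
      rcases n with _ | n
      · -- (m+1, 0, p)
        rw [fconst b]
        rcases p with _ | p
        · -- (m+1, 0, 0)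
          rw [fconst c,
            hm0 (m + 1) a (b 0),
            hm0 (m + 1) (Function.update a 0 (a 0 * b 0)) (c 0),
            mul00, hm0 (m + 1) a (b 0 * c 0),
            Function.update_self, Function.update_idem, mul_assoc]
        · -- (m+1, 0, p+1)
          rw [hm0 (m + 1) a (b 0),
            hmn m p (Function.update a 0 (a 0 * b 0)) c,
            h0n (b 0) (p + 1) c,
            hmn m p a (Function.update c 0 (b 0 * c 0)),
            Function.update_self, Function.update_self,
            Fin.tail_update_zero, Fin.tail_update_zero, mul_assoc]
      rcases p with _ | p
      · -- (m+1, n+1, 0)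
        rw [fconst c,
          hmn m n a b, lem0R,
          hm0 (n + 1) b (c 0),
          hmn m n a (Function.update b 0 (b 0 * c 0)),
          Function.update_self, Fin.tail_update_zero, mul_assoc]
      · -- main case (m+1, n+1, p+1)
        rw [hmn m n a b, lemL, hmn n p b c, lemR,
          lemOne m n (Fin.tail a) (Fin.tail b), lemOne n p (Fin.tail b) (Fin.tail c)]
        simp only [map_add, map_smul, LinearMap.add_apply, LinearMap.smul_apply,
          smul_add, smul_smul]
        rw [ih m (n + 1) (p + 1) (by omega) (Fin.tail a) (Fin.cons 1 (Fin.tail b))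
              (Fin.cons 1 (Fin.tail c)),
            ih (m + 1) n (p + 1) (by omega) (Fin.cons 1 (Fin.tail a)) (Fin.tail b)
              (Fin.cons 1 (Fin.tail c)),
            ih m n (p + 1) (by omega) (Fin.tail a) (Fin.tail b) (Fin.cons 1 (Fin.tail c)),
            ih (m + 1) (n + 1) p (by omega) (Fin.cons 1 (Fin.tail a)) (Fin.cons 1 (Fin.tail b))
              (Fin.tail c),
            ih m (n + 1) p (by omega) (Fin.tail a) (Fin.cons 1 (Fin.tail b)) (Fin.tail c),
            ih (m + 1) n p (by omega) (Fin.cons 1 (Fin.tail a)) (Fin.tail b) (Fin.tail c),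
            ih m n p (by omega) (Fin.tail a) (Fin.tail b) (Fin.tail c),
            mul_assoc]
        abel
  refine ⟨?_, ?_, ?_⟩
  · -- commutativity
    intro x y
    have h : mul = mul.flip := by
      apply LinearMap.ext_on hST
      rintro x ⟨⟨m, f⟩, rfl⟩
      apply LinearMap.ext_on hST
      rintro y ⟨⟨n, g⟩, rfl⟩
      simpa using commKey (m + n) m n le_rfl f g
    conv_lhs => rw [h]
    exact LinearMap.flip_apply mul y x
  · -- associativity
    intro x y z
    have h : mul.compr₂ mul =
        LinearMap.mk₂ k (fun x y => (mul x).comp (mul y))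
          (fun x₁ x₂ y => by simp only [map_add, LinearMap.add_comp])
          (fun r x y => by simp only [map_smul, LinearMap.smul_comp])
          (fun x y₁ y₂ => by simp only [map_add, LinearMap.comp_add])
          (fun r x y => by simp only [map_smul, LinearMap.comp_smul]) := by
      apply LinearMap.ext_on hST
      rintro x ⟨⟨m, f⟩, rfl⟩
      apply LinearMap.ext_on hST
      rintro y ⟨⟨n, g⟩, rfl⟩
      apply LinearMap.ext_on hST
      rintro z ⟨⟨p, h'⟩, rfl⟩
      simpa using assocKey (m + n + p) m n p le_rfl f g h'
    have := LinearMap.congr_fun (LinearMap.congr_fun (LinearMap.congr_fun h x) y) z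
    simpa using this
  · -- unit
    intro x
    constructor
    · have h : mul (mixTensor 0 fun _ => (1 : A)) = LinearMap.id := by
        apply lin_ext
        intro m f
        simp [h0n, Function.update_eq_self]
      rw [h, LinearMap.id_apply]
    · have h : mul.flip (mixTensor 0 fun _ => (1 : A)) = LinearMap.id := by
        apply lin_ext
        intro m f
        simp [hm0, Function.update_eq_self, LinearMap.flip_apply]
      have := LinearMap.congr_fun h x
      simpa using this
end

section
/- Let (A, d) be a commutative differential algebra of weight λ and define d_A on Ш(A) by d_A(u₀⊗u₁⊗⋯⊗u_k) = d(u₀)⊗u₁⊗⋯⊗u_k + u₀u₁⊗u₂⊗⋯⊗u_k + λ d(u₀)u₁⊗u₂⊗⋯⊗u_k (for k ≥ 1, and d_A(u₀) = d(u₀)). Then d_A is a λ-derivation on Ш(A), and d_A ∘ P_A = id on Ш(A), so (Ш(A), d_A, P_A) is a differential Rota-Baxter algebra of weight λ. -/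
open scoped TensorProduct DirectSum
open PiTensorProduct

/-!
Every tensor of length at least two is `L c x`, and the tensors `incl c` of length one behave
as central scalars: `incl c` commutes with everything and can be pulled out of either factor of
a product. In these terms the two defining recursions read
`L a x * L b y = L (a * b) (x * P y + P x * y + λ x * y)` with `P = L 1`, and
`dM (L c x) = L (D c) x + incl c * x + λ incl (D c) * x`.
The second formula does not involve `dM x`, so on two generators both sides of the λ-Leibniz
rule normalise to combinations of the same few terms, whose coefficients agree by the λ-Leibniz
rule of `D`; no induction on the length is needed. Finally `dM (P x) = x` because `D 1 = 0`
and `incl 1` is a left unit.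
-/

namespace MixShuffle

variable {k A : Type*} [CommRing k] [CommRing A] [Algebra k A]

theorem linearMap_ext {M : Type*} [AddCommMonoid M] [Module k M]
    {F G : MixShuffle k A →ₗ[k] M}
    (h : ∀ (m : ℕ) (f : Fin (m + 1) → A), F (mixTensor m f) = G (mixTensor m f)) : F = G :=
  DirectSum.linearMap_ext k fun m => PiTensorProduct.ext <| MultilinearMap.ext (h m)

theorem linearMap_ext₂ {M : Type*} [AddCommMonoid M] [Module k M]
    {B B' : MixShuffle k A →ₗ[k] MixShuffle k A →ₗ[k] M}
    (h : ∀ (m : ℕ) (f : Fin (m + 1) → A) (n : ℕ) (g : Fin (n + 1) → A),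
      B (mixTensor m f) (mixTensor n g) = B' (mixTensor m f) (mixTensor n g)) : B = B' :=
  linearMap_ext fun m f => linearMap_ext (h m f)

theorem mixTensor_update_add (m : ℕ) (f : Fin (m + 1) → A) (i : Fin (m + 1)) (x y : A) :
    mixTensor (k := k) m (Function.update f i (x + y)) =
      mixTensor m (Function.update f i x) + mixTensor m (Function.update f i y) := by
  simp only [mixTensor, MultilinearMap.map_update_add, map_add]

theorem mixTensor_update_smul (m : ℕ) (f : Fin (m + 1) → A) (i : Fin (m + 1)) (r : k) (x : A) :
    mixTensor (k := k) m (Function.update f i (r • x)) =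
      r • mixTensor m (Function.update f i x) := by
  simp only [mixTensor, MultilinearMap.map_update_smul, ← DirectSum.lof_eq_of k, map_smul]

theorem mixTensor_eq_zero (m : ℕ) (f : Fin (m + 1) → A) (i : Fin (m + 1)) (h : f i = 0) :
    mixTensor (k := k) m f = 0 := by
  rw [mixTensor, MultilinearMap.map_coord_zero _ i h, map_zero]

noncomputable def incl (c : A) : MixShuffle k A := mixTensor 0 fun _ => c

theorem incl_add (c e : A) : (incl (c + e) : MixShuffle k A) = incl c + incl e := by
  simp only [incl, mixTensor, ← subsingletonEquiv_symm_apply' (R := k) (0 : Fin 1), map_add]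

theorem incl_smul (r : k) (c : A) : (incl (r • c) : MixShuffle k A) = r • incl c := by
  simp only [incl, mixTensor, ← subsingletonEquiv_symm_apply' (R := k) (0 : Fin 1), map_smul,
    ← DirectSum.lof_eq_of k]

theorem incl_zero : (incl 0 : MixShuffle k A) = 0 := by
  simpa using incl_smul (k := k) 0 (0 : A)

theorem mixTensor_zero_eq_incl (f : Fin 1 → A) : mixTensor 0 f = (incl (f 0) : MixShuffle k A) :=
  congrArg _ (funext fun i => congrArg f (Subsingleton.elim i 0))

def IsLeftConcat (L : A → MixShuffle k A →ₗ[k] MixShuffle k A) : Prop :=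
  ∀ (c : A) (m : ℕ) (f : Fin (m + 1) → A),
    L c (mixTensor m f) = mixTensor (m + 1) (Fin.cons c f)

namespace IsLeftConcat

variable {L : A → MixShuffle k A →ₗ[k] MixShuffle k A}

theorem mixTensor_succ (hL : IsLeftConcat L) {m : ℕ} (a : Fin (m + 2) → A) :
    mixTensor (m + 1) a = L (a 0) (mixTensor m (Fin.tail a)) := by
  rw [hL, Fin.cons_self_tail]

theorem linearMap_ext (hL : IsLeftConcat L) {M : Type*} [AddCommMonoid M] [Module k M]
    {F G : MixShuffle k A →ₗ[k] M} (h_incl : ∀ c, F (incl c) = G (incl c))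
    (h_L : ∀ c x, F (L c x) = G (L c x)) : F = G :=
  MixShuffle.linearMap_ext fun m f => by
    cases m with
    | zero => rw [mixTensor_zero_eq_incl, h_incl]
    | succ m => rw [hL.mixTensor_succ, h_L]

theorem linearMap_ext₂ (hL : IsLeftConcat L) {M : Type*} [AddCommMonoid M] [Module k M]
    {B B' : MixShuffle k A →ₗ[k] MixShuffle k A →ₗ[k] M}
    (h_incl_incl : ∀ c e, B (incl c) (incl e) = B' (incl c) (incl e))
    (h_incl_L : ∀ c e y, B (incl c) (L e y) = B' (incl c) (L e y))
    (h_L_incl : ∀ c x e, B (L c x) (incl e) = B' (L c x) (incl e))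
    (h_L_L : ∀ c x e y, B (L c x) (L e y) = B' (L c x) (L e y)) : B = B' :=
  hL.linearMap_ext (fun c => hL.linearMap_ext (h_incl_incl c) (h_incl_L c))
    fun c x => hL.linearMap_ext (h_L_incl c x) (h_L_L c x)

theorem map_add_left (hL : IsLeftConcat L) (c e : A) : L (c + e) = L c + L e :=
  MixShuffle.linearMap_ext fun m f => by
    rw [LinearMap.add_apply, hL, hL, hL]
    simpa only [Fin.update_cons_zero] using
      mixTensor_update_add (k := k) (m + 1) (Fin.cons 0 f) 0 c e

theorem map_smul_left (hL : IsLeftConcat L) (r : k) (c : A) : L (r • c) = r • L c :=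
  MixShuffle.linearMap_ext fun m f => by
    rw [LinearMap.smul_apply, hL, hL]
    simpa only [Fin.update_cons_zero] using
      mixTensor_update_smul (k := k) (m + 1) (Fin.cons 0 f) 0 r c

theorem map_zero_left (hL : IsLeftConcat L) : L 0 = 0 :=
  MixShuffle.linearMap_ext fun m f => by
    rw [hL, LinearMap.zero_apply]
    exact mixTensor_eq_zero _ _ 0 rfl

end IsLeftConcat

structure IsMixableShuffleProduct (lam : k) (L : A → MixShuffle k A →ₗ[k] MixShuffle k A)
    (mul : MixShuffle k A →ₗ[k] MixShuffle k A →ₗ[k] MixShuffle k A) : Prop where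
  incl_mul_mixTensor (a0 : A) (n : ℕ) (b : Fin (n + 1) → A) :
    mul (incl a0) (mixTensor n b) = mixTensor n (Function.update b 0 (a0 * b 0))
  mixTensor_mul_incl (m : ℕ) (a : Fin (m + 1) → A) (b0 : A) :
    mul (mixTensor m a) (incl b0) = mixTensor m (Function.update a 0 (a 0 * b0))
  mixTensor_succ_mul_mixTensor_succ (m n : ℕ) (a : Fin (m + 2) → A) (b : Fin (n + 2) → A) :
    mul (mixTensor (m + 1) a) (mixTensor (n + 1) b) =
      L (a 0 * b 0)
        (mul (mixTensor m (Fin.tail a)) (mixTensor (n + 1) (Fin.cons 1 (Fin.tail b)))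
          + mul (mixTensor (m + 1) (Fin.cons 1 (Fin.tail a))) (mixTensor n (Fin.tail b))
          + lam • mul (mixTensor m (Fin.tail a)) (mixTensor n (Fin.tail b)))

namespace IsMixableShuffleProduct

variable {lam : k} {L : A → MixShuffle k A →ₗ[k] MixShuffle k A}
  {mul : MixShuffle k A →ₗ[k] MixShuffle k A →ₗ[k] MixShuffle k A}

theorem incl_mul_incl (hmul : IsMixableShuffleProduct lam L mul) (c e : A) :
    mul (incl c) (incl e) = incl (c * e) := by
  simpa only [mixTensor_zero_eq_incl, Function.update_self] using
    hmul.incl_mul_mixTensor c 0 fun _ => e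

theorem mul_incl_comm (hmul : IsMixableShuffleProduct lam L mul) (x : MixShuffle k A) (c : A) :
    mul x (incl c) = mul (incl c) x := by
  refine LinearMap.congr_fun (MixShuffle.linearMap_ext (F := mul.flip (incl c))
    (G := mul (incl c)) fun m f => ?_) x
  rw [LinearMap.flip_apply, hmul.mixTensor_mul_incl, hmul.incl_mul_mixTensor, mul_comm]

theorem incl_one_mul (hmul : IsMixableShuffleProduct lam L mul) (x : MixShuffle k A) :
    mul (incl 1) x = x := by
  refine LinearMap.congr_fun (linearMap_ext (F := mul (incl 1)) (G := LinearMap.id)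
    fun m f => ?_) x
  rw [hmul.incl_mul_mixTensor, one_mul, Function.update_eq_self, LinearMap.id_apply]

theorem incl_mul_L (hL : IsLeftConcat L) (hmul : IsMixableShuffleProduct lam L mul) (c e : A)
    (x : MixShuffle k A) : mul (incl c) (L e x) = L (c * e) x := by
  refine LinearMap.congr_fun (linearMap_ext (F := mul (incl c) ∘ₗ L e) (G := L (c * e))
    fun m f => ?_) x
  rw [LinearMap.comp_apply, hL, hL, hmul.incl_mul_mixTensor, Fin.cons_zero, Fin.update_cons_zero]

theorem L_mul_incl (hL : IsLeftConcat L) (hmul : IsMixableShuffleProduct lam L mul) (c e : A)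
    (x : MixShuffle k A) : mul (L c x) (incl e) = L (c * e) x := by
  rw [hmul.mul_incl_comm, hmul.incl_mul_L hL, mul_comm]

theorem L_eq_incl_mul (hL : IsLeftConcat L) (hmul : IsMixableShuffleProduct lam L mul) (c : A)
    (x : MixShuffle k A) : L c x = mul (incl c) (L 1 x) := by
  rw [hmul.incl_mul_L hL, mul_one]

theorem L_mul_L (hL : IsLeftConcat L) (hmul : IsMixableShuffleProduct lam L mul) (c e : A)
    (x y : MixShuffle k A) :
    mul (L c x) (L e y) = L (c * e) (mul x (L 1 y) + mul (L 1 x) y + lam • mul x y) := by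
  refine LinearMap.congr_fun₂ (linearMap_ext₂ (B := (mul ∘ₗ L c).compl₂ (L e))
    (B' := (mul.compl₂ (L 1) + mul ∘ₗ L 1 + lam • mul).compr₂ (L (c * e)))
    fun m f n g => ?_) x y
  simp only [LinearMap.compl₂_apply, LinearMap.compr₂_apply, LinearMap.comp_apply,
    LinearMap.add_apply, LinearMap.smul_apply]
  rw [hL c, hL e, hmul.mixTensor_succ_mul_mixTensor_succ, Fin.cons_zero, Fin.cons_zero,
    Fin.tail_cons, Fin.tail_cons, ← hL 1 n g, ← hL 1 m f]

theorem mul_assoc_incl (hL : IsLeftConcat L) (hmul : IsMixableShuffleProduct lam L mul) (c : A)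
    (x y : MixShuffle k A) : mul (mul (incl c) x) y = mul (incl c) (mul x y) := by
  refine LinearMap.congr_fun₂ (hL.linearMap_ext₂ (B := mul ∘ₗ mul (incl c))
    (B' := mul.compr₂ (mul (incl c))) ?_ ?_ ?_ ?_) x y <;>
  intros <;>
  simp only [LinearMap.comp_apply, LinearMap.compr₂_apply, hmul.incl_mul_incl,
    hmul.incl_mul_L hL, hmul.L_mul_incl hL, hmul.L_mul_L hL, mul_assoc]

theorem mul_left_comm_incl (hL : IsLeftConcat L) (hmul : IsMixableShuffleProduct lam L mul)
    (c : A) (x y : MixShuffle k A) : mul x (mul (incl c) y) = mul (incl c) (mul x y) := by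
  refine LinearMap.congr_fun₂ (hL.linearMap_ext₂ (B := mul.compl₂ (mul (incl c)))
    (B' := mul.compr₂ (mul (incl c))) ?_ ?_ ?_ ?_) x y <;>
  intros <;>
  simp only [LinearMap.compl₂_apply, LinearMap.compr₂_apply, hmul.incl_mul_incl,
    hmul.incl_mul_L hL, hmul.L_mul_incl hL, hmul.L_mul_L hL, mul_left_comm]

theorem incl_mul_incl_mul (hL : IsLeftConcat L) (hmul : IsMixableShuffleProduct lam L mul)
    (c e : A) (x : MixShuffle k A) : mul (incl c) (mul (incl e) x) = mul (incl (c * e)) x := by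
  rw [← hmul.mul_assoc_incl hL, hmul.incl_mul_incl]

theorem incl_mul_mul_L (hL : IsLeftConcat L) (hmul : IsMixableShuffleProduct lam L mul)
    (c e : A) (x y : MixShuffle k A) :
    mul (mul (incl c) x) (L e y) = mul (incl (c * e)) (mul x (L 1 y)) := by
  rw [hmul.mul_assoc_incl hL, hmul.L_eq_incl_mul hL e y, hmul.mul_left_comm_incl hL,
    hmul.incl_mul_incl_mul hL]

theorem L_mul_incl_mul (hL : IsLeftConcat L) (hmul : IsMixableShuffleProduct lam L mul)
    (c e : A) (x y : MixShuffle k A) :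
    mul (L c x) (mul (incl e) y) = mul (incl (c * e)) (mul (L 1 x) y) := by
  rw [hmul.mul_left_comm_incl hL, hmul.L_eq_incl_mul hL c x, hmul.mul_assoc_incl hL,
    hmul.incl_mul_incl_mul hL, mul_comm]

theorem incl_mul_mul_incl_mul (hL : IsLeftConcat L) (hmul : IsMixableShuffleProduct lam L mul)
    (c e : A) (x y : MixShuffle k A) :
    mul (mul (incl c) x) (mul (incl e) y) = mul (incl (c * e)) (mul x y) := by
  rw [hmul.mul_assoc_incl hL, hmul.mul_left_comm_incl hL, hmul.incl_mul_incl_mul hL]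

end IsMixableShuffleProduct

structure IsInducedDifferential (lam : k) (D : A →ₗ[k] A)
    (dM : MixShuffle k A →ₗ[k] MixShuffle k A) : Prop where
  map_incl (u0 : A) : dM (incl u0) = incl (D u0)
  map_mixTensor_succ (m : ℕ) (u : Fin (m + 2) → A) :
    dM (mixTensor (m + 1) u) =
      mixTensor (m + 1) (Function.update u 0 (D (u 0)))
        + mixTensor m (Fin.cons (u 0 * u 1) fun i : Fin m => u i.succ.succ)
        + lam • mixTensor m (Fin.cons (D (u 0) * u 1) fun i : Fin m => u i.succ.succ)

namespace IsInducedDifferential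

variable {lam : k} {D : A →ₗ[k] A} {dM : MixShuffle k A →ₗ[k] MixShuffle k A}
  {L : A → MixShuffle k A →ₗ[k] MixShuffle k A}
  {mul : MixShuffle k A →ₗ[k] MixShuffle k A →ₗ[k] MixShuffle k A}

theorem map_L (hdM : IsInducedDifferential lam D dM) (hL : IsLeftConcat L)
    (hmul : IsMixableShuffleProduct lam L mul) (c : A) (x : MixShuffle k A) :
    dM (L c x) = L (D c) x + mul (incl c) x + lam • mul (incl (D c)) x := by
  have update_zero_eq_cons : ∀ {m : ℕ} (f : Fin (m + 1) → A) (a : A),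
      Function.update f 0 a = Fin.cons a (Fin.tail f) := fun f a => by
    rw [← Fin.cons_self_tail (Function.update f 0 a), Function.update_self, Fin.tail_update_zero]
  refine LinearMap.congr_fun (linearMap_ext (F := dM ∘ₗ L c)
    (G := L (D c) + mul (incl c) + lam • mul (incl (D c))) fun m f => ?_) x
  simp only [LinearMap.comp_apply, LinearMap.add_apply, LinearMap.smul_apply, hL _ m f,
    hdM.map_mixTensor_succ, Fin.cons_zero, Fin.cons_one, Fin.cons_succ,
    hmul.incl_mul_mixTensor, update_zero_eq_cons]
  rfl

theorem leibniz_incl_left (hdM : IsInducedDifferential lam D dM) (hL : IsLeftConcat L)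
    (hmul : IsMixableShuffleProduct lam L mul)
    (hD : ∀ x y : A, D (x * y) = D x * y + x * D y + lam • (D x * D y)) (c : A)
    (y : MixShuffle k A) :
    dM (mul (incl c) y) =
      mul (dM (incl c)) y + mul (incl c) (dM y) + lam • mul (dM (incl c)) (dM y) := by
  rw [hdM.map_incl]
  refine LinearMap.congr_fun (hL.linearMap_ext (F := dM ∘ₗ mul (incl c))
    (G := mul (incl (D c)) + mul (incl c) ∘ₗ dM + lam • mul (incl (D c)) ∘ₗ dM)
    (fun e => ?_) fun e v => ?_) y
  · simp only [LinearMap.comp_apply, LinearMap.add_apply, LinearMap.smul_apply,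
      hmul.incl_mul_incl, hdM.map_incl, hD, incl_add, incl_smul]
  · simp only [LinearMap.comp_apply, LinearMap.add_apply, LinearMap.smul_apply,
      hmul.incl_mul_L hL, hdM.map_L hL hmul, map_add, map_smul, hmul.incl_mul_incl_mul hL, hD,
      hL.map_add_left, hL.map_smul_left, incl_add, incl_smul, smul_add]
    abel

theorem leibniz_incl_right (hdM : IsInducedDifferential lam D dM) (hL : IsLeftConcat L)
    (hmul : IsMixableShuffleProduct lam L mul)
    (hD : ∀ x y : A, D (x * y) = D x * y + x * D y + lam • (D x * D y)) (x : MixShuffle k A)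
    (c : A) :
    dM (mul x (incl c)) =
      mul (dM x) (incl c) + mul x (dM (incl c)) + lam • mul (dM x) (dM (incl c)) := by
  rw [hmul.mul_incl_comm, hdM.leibniz_incl_left hL hmul hD, hdM.map_incl, hmul.mul_incl_comm x,
    hmul.mul_incl_comm (dM x), hmul.mul_incl_comm (dM x), add_comm (mul (incl (D c)) x)]

theorem leibniz_L_L (hdM : IsInducedDifferential lam D dM) (hL : IsLeftConcat L)
    (hmul : IsMixableShuffleProduct lam L mul)
    (hD : ∀ x y : A, D (x * y) = D x * y + x * D y + lam • (D x * D y)) (c e : A)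
    (x y : MixShuffle k A) :
    dM (mul (L c x) (L e y)) =
      mul (dM (L c x)) (L e y) + mul (L c x) (dM (L e y))
        + lam • mul (dM (L c x)) (dM (L e y)) := by
  simp only [hmul.L_mul_L hL, hdM.map_L hL hmul, map_add, map_smul, LinearMap.add_apply,
    LinearMap.smul_apply, hmul.incl_mul_mul_L hL, hmul.L_mul_incl_mul hL,
    hmul.incl_mul_mul_incl_mul hL, hD, hL.map_add_left, hL.map_smul_left, incl_add, incl_smul,
    smul_add]
  abel

theorem leibniz (hdM : IsInducedDifferential lam D dM) (hL : IsLeftConcat L)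
    (hmul : IsMixableShuffleProduct lam L mul)
    (hD : ∀ x y : A, D (x * y) = D x * y + x * D y + lam • (D x * D y)) (x y : MixShuffle k A) :
    dM (mul x y) = mul (dM x) y + mul x (dM y) + lam • mul (dM x) (dM y) := by
  refine LinearMap.congr_fun₂ (hL.linearMap_ext₂ (B := mul.compr₂ dM)
    (B' := mul ∘ₗ dM + mul.compl₂ dM + lam • (mul ∘ₗ dM).compl₂ dM)
    (fun c e => ?_) (fun c e y => ?_) (fun c x e => ?_) fun c x e y => ?_) x y <;>
  simp only [LinearMap.compr₂_apply, LinearMap.compl₂_apply, LinearMap.comp_apply,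
    LinearMap.add_apply, LinearMap.smul_apply]
  · exact hdM.leibniz_incl_left hL hmul hD c _
  · exact hdM.leibniz_incl_left hL hmul hD c _
  · exact hdM.leibniz_incl_right hL hmul hD _ e
  · exact hdM.leibniz_L_L hL hmul hD c e x y

theorem map_incl_one (hdM : IsInducedDifferential lam D dM) (hD : D 1 = 0) :
    dM (incl 1) = 0 := by
  rw [hdM.map_incl, hD, incl_zero]

theorem map_L_one (hdM : IsInducedDifferential lam D dM) (hL : IsLeftConcat L)
    (hmul : IsMixableShuffleProduct lam L mul) (hD : D 1 = 0) (x : MixShuffle k A) :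
    dM (L 1 x) = x := by
  rw [hdM.map_L hL hmul, hD, hL.map_zero_left, incl_zero, map_zero, LinearMap.zero_apply,
    smul_zero, zero_add, add_zero, hmul.incl_one_mul]

end IsInducedDifferential

end MixShuffle

/-- for a commutative differential algebra (A,D) of weight λ, the
operator d_A on Ш(A) defined by
d_A(u₀⊗u₁⊗⋯⊗u_k) = D(u₀)⊗u₁⊗⋯⊗u_k + u₀u₁⊗u₂⊗⋯⊗u_k + λD(u₀)u₁⊗u₂⊗⋯⊗u_k
(and d_A(u₀) = D(u₀)) is a λ-derivation on Ш(A) (for the mixable shuffle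
product `mul`, with left concatenation `L`), and d_A ∘ P_A = id where
P_A = L 1; hence (Ш(A), d_A, P_A) is a differential Rota-Baxter algebra of
weight λ. -/
theorem mixable_shuffle_differential_rota_baxter
    {k A : Type*} [CommRing k] [CommRing A] [Algebra k A] (lam : k)
    (D : A →ₗ[k] A)
    (hLeibniz : ∀ x y : A, D (x * y) = D x * y + x * D y + lam • (D x * D y))
    (hone : D 1 = 0)
    (mul : MixShuffle k A →ₗ[k] MixShuffle k A →ₗ[k] MixShuffle k A)
    (L : A → MixShuffle k A →ₗ[k] MixShuffle k A)
    (hL : ∀ (c : A) (m : ℕ) (f : Fin (m + 1) → A),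
      L c (mixTensor m f) = mixTensor (m + 1) (Fin.cons c f))
    (h0n : ∀ (a0 : A) (n : ℕ) (b : Fin (n + 1) → A),
      mul (mixTensor 0 fun _ => a0) (mixTensor n b) =
        mixTensor n (Function.update b 0 (a0 * b 0)))
    (hm0 : ∀ (m : ℕ) (a : Fin (m + 1) → A) (b0 : A),
      mul (mixTensor m a) (mixTensor 0 fun _ => b0) =
        mixTensor m (Function.update a 0 (a 0 * b0)))
    (hmn : ∀ (m n : ℕ) (a : Fin (m + 2) → A) (b : Fin (n + 2) → A),
      mul (mixTensor (m + 1) a) (mixTensor (n + 1) b) =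
        L (a 0 * b 0)
          (mul (mixTensor m (Fin.tail a))
              (mixTensor (n + 1) (Fin.cons 1 (Fin.tail b)))
            + mul (mixTensor (m + 1) (Fin.cons 1 (Fin.tail a)))
                (mixTensor n (Fin.tail b))
            + lam • mul (mixTensor m (Fin.tail a)) (mixTensor n (Fin.tail b))))
    (dM : MixShuffle k A →ₗ[k] MixShuffle k A)
    (hd0 : ∀ u0 : A,
      dM (mixTensor 0 fun _ => u0) = mixTensor 0 fun _ => D u0)
    (hdrec : ∀ (m : ℕ) (u : Fin (m + 2) → A),
      dM (mixTensor (m + 1) u) =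
        mixTensor (m + 1) (Function.update u 0 (D (u 0)))
          + mixTensor m (Fin.cons (u 0 * u 1) fun i : Fin m => u i.succ.succ)
          + lam • mixTensor m
              (Fin.cons (D (u 0) * u 1) fun i : Fin m => u i.succ.succ)) :
    (∀ x y : MixShuffle k A,
      dM (mul x y) = mul (dM x) y + mul x (dM y) + lam • mul (dM x) (dM y)) ∧
    dM (mixTensor 0 fun _ => (1 : A)) = 0 ∧
    (∀ x : MixShuffle k A, dM (L 1 x) = x) := by
  have hmul : MixShuffle.IsMixableShuffleProduct lam L mul := ⟨h0n, hm0, hmn⟩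
  have hdM : MixShuffle.IsInducedDifferential lam D dM := ⟨hd0, hdrec⟩
  exact ⟨hdM.leibniz hL hmul hLeibniz, hdM.map_incl_one hone, hdM.map_L_one hL hmul hone⟩
end

section
/- Let A = k{X} = k[ΔX] be the free commutative differential algebra of weight λ on a set X, where ΔX = {x^{(n)} : x ∈ X, n ≥ 0} and the derivation d sends x^{(n)} to x^{(n+1)} extended by the weight-λ Leibniz rule. Let A_T be the k-span of functional monomials (monomials u = u₀^{j₀}⋯u_k^{j_k} in standard form with u₀ > ⋯ > u_k in ΔX whose minimal factor u_k either lies in X or has exponent j_k > 1, together with u = 1). Then A_T is a k-subalgebra of A, i.e., the product of two functional monomials is functional. -/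
open MvPolynomial

variable {X : Type*} [LinearOrder X] [WellFoundedLT X]

/-- The order on ΔX = {x^{(i)}}: x^{(i)} ≤ y^{(j)} iff (x,−i) ≤ (y,−j)
lexicographically; here x^{(i)} is encoded as (x, i) ∈ X × ℕ. -/
def deltaKey (p : X × ℕ) : Lex (X × ℕᵒᵈ) := toLex (p.1, OrderDual.toDual p.2)

/-- A monomial m ∈ C(ΔX) (exponent vector on ΔX = X × ℕ) is functional if
m = 1, or its minimal variable u_k (w.r.t. the order on ΔX) lies in X
(derivative order 0) or occurs with exponent > 1. -/
def IsFunctional (m : (X × ℕ) →₀ ℕ) : Prop :=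
  m = 0 ∨ ∃ p ∈ m.support,
    (∀ q ∈ m.support, deltaKey p ≤ deltaKey q) ∧ (p.2 = 0 ∨ 1 < m p)

theorem IsFunctional.add {m n : (X × ℕ) →₀ ℕ}
    (hm : IsFunctional m) (hn : IsFunctional n) : IsFunctional (m + n) := by
  rcases hm with rfl | ⟨p, hp, hpmin, hpc⟩
  · simpa using hn
  rcases hn with rfl | ⟨q, hq, hqmin, hqc⟩
  · rw [add_zero]; exact Or.inr ⟨p, hp, hpmin, hpc⟩
  have hmem : ∀ r : X × ℕ, r ∈ (m + n).support → r ∈ m.support ∨ r ∈ n.support := by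
    intro r hr
    rw [Finsupp.mem_support_iff, Finsupp.add_apply] at hr
    rw [Finsupp.mem_support_iff, Finsupp.mem_support_iff]
    omega
  rcases le_total (deltaKey p) (deltaKey q) with hle | hle
  · refine Or.inr ⟨p, ?_, ?_, ?_⟩
    · rw [Finsupp.mem_support_iff, Finsupp.add_apply]
      rw [Finsupp.mem_support_iff] at hp; omega
    · intro r hr
      rcases hmem r hr with h | h
      · exact hpmin r h
      · exact hle.trans (hqmin r h)
    · rcases hpc with h | h
      · exact Or.inl h
      · refine Or.inr ?_
        rw [Finsupp.add_apply]; omega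
  · refine Or.inr ⟨q, ?_, ?_, ?_⟩
    · rw [Finsupp.mem_support_iff, Finsupp.add_apply]
      rw [Finsupp.mem_support_iff] at hq; omega
    · intro r hr
      rcases hmem r hr with h | h
      · exact hle.trans (hpmin r h)
      · exact hqmin r h
    · rcases hqc with h | h
      · exact Or.inl h
      · refine Or.inr ?_
        rw [Finsupp.add_apply]; omega

/-- the product of two functional monomials is functional; hence
the span A_T of the functional monomials is a (unital) k-subalgebra of
A = k{X} = k[ΔX]. -/
theorem functional_monomials_subalgebra
    {k : Type*} [CommRing k] :
    (∀ m n : (X × ℕ) →₀ ℕ,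
      IsFunctional m → IsFunctional n → IsFunctional (m + n)) ∧
    ∃ S : Subalgebra k (MvPolynomial (X × ℕ) k),
      Subalgebra.toSubmodule S =
        Submodule.span k
          {f : MvPolynomial (X × ℕ) k |
            ∃ m : (X × ℕ) →₀ ℕ, IsFunctional m ∧ f = monomial m 1} := by
  refine ⟨fun m n hm hn => hm.add hn, ?_⟩
  set s : Set (MvPolynomial (X × ℕ) k) :=
    {f | ∃ m : (X × ℕ) →₀ ℕ, IsFunctional m ∧ f = monomial m 1} with hs
  have h1 : (1 : MvPolynomial (X × ℕ) k) ∈ Submodule.span k s :=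
    Submodule.subset_span ⟨0, Or.inl rfl, by simp⟩
  have hmul : ∀ x y : MvPolynomial (X × ℕ) k,
      x ∈ Submodule.span k s → y ∈ Submodule.span k s →
      x * y ∈ Submodule.span k s := by
    intro x y hx hy
    have hxy : x * y ∈ Submodule.span k s * Submodule.span k s :=
      Submodule.mul_mem_mul hx hy
    rw [Submodule.span_mul_span] at hxy
    refine Submodule.span_le.mpr ?_ hxy
    rintro f ⟨a, ⟨ma, hma, rfl⟩, b, ⟨mb, hmb, rfl⟩, rfl⟩
    exact Submodule.subset_span ⟨ma + mb, hma.add hmb, by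
      simp [MvPolynomial.monomial_mul]⟩
  exact ⟨(Submodule.span k s).toSubalgebra h1 hmul, rfl⟩
end

section
/- Let A = ℂ(x) be the field of rational functions and D₀ = d/dx the ordinary derivative. Let ℂ(x)_T = {Σ_{i=1}^k γ_i/(x−α_i) : α_i ∈ ℂ distinct, γ_i ∈ ℂ}. Then ℂ(x) = im(D₀) ⊕ ℂ(x)_T as ℂ-vector spaces. -/
/-!
Over an algebraically closed field `K`, the monomials `X ^ n` and the powers `(X - α)⁻¹ ^ (k + 1)`
form a basis of `K(X)`: they span by partial fractions, and they are linearly independent because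
partial fraction decompositions are unique. A derivation with `D X = 1` sends each of these basis
vectors to a multiple of another basis vector that is not a simple fraction `(X - α)⁻¹`. In
characteristic zero every basis vector other than the simple fractions is a derivative. So `im D`
is spanned by the basis vectors other than the simple fractions, and these simple fractions span
a complement of `im D`.
-/

open Polynomial

namespace RatFunc

variable {K : Type*} [Field K]

noncomputable def partialFractionBasis : ℕ ⊕ K × ℕ → RatFunc K
  | .inl n => X ^ n
  | .inr (α, k) => (X - C α)⁻¹ ^ (k + 1)

def simplePoleIndices : Set (ℕ ⊕ K × ℕ) := Set.range fun α => .inr (α, 0)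

lemma image_simplePoleIndices :
    partialFractionBasis '' simplePoleIndices = {f : RatFunc K | ∃ α, f = (X - C α)⁻¹} := by
  ext f
  simp [simplePoleIndices, partialFractionBasis, eq_comm]

lemma algebraMap_X_sub_C (α : K) :
    algebraMap K[X] (RatFunc K) (Polynomial.X - Polynomial.C α) = X - C α := by
  simp only [map_sub, algebraMap_X, algebraMap_C]

lemma X_sub_C_ne_zero (α : K) : (X - C α : RatFunc K) ≠ 0 :=
  algebraMap_X_sub_C α ▸ algebraMap_ne_zero (Polynomial.X_sub_C_ne_zero α)

lemma X_sub_C_inv_mul_algebraMap (α : K) :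
    (X - C α)⁻¹ * algebraMap K[X] (RatFunc K) (Polynomial.X - Polynomial.C α) = 1 := by
  rw [algebraMap_X_sub_C, inv_mul_cancel₀ (X_sub_C_ne_zero α)]

lemma eq_zero_of_algebraMap_add_sum_C_mul_inv_pow_eq_zero {A : Finset K} {N : ℕ} {q : K[X]}
    {c : K → ℕ → K}
    (h : algebraMap K[X] (RatFunc K) q +
      ∑ α ∈ A, ∑ j ∈ Finset.range N, C (c α j) * (X - C α)⁻¹ ^ (j + 1) = 0) :
    q = 0 ∧ ∀ α ∈ A, ∀ j < N, c α j = 0 := by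
  have hdeg (r α : K) : (Polynomial.C r).degree < (Polynomial.X - Polynomial.C α).degree :=
    degree_C_le.trans_lt (by simp)
  simp_rw [Finset.sum_range, ← algebraMap_C] at h
  obtain ⟨hq, hc⟩ := quo_add_sum_rem_mul_pow_inverse_unique (n := fun _ => N)
    (r₂ := fun _ _ => 0) (q₂ := 0) (fun α _ => monic_X_sub_C α)
    ((pairwise_coprime_X_sub_C Function.injective_id).set_pairwise _)
    (fun α _ => X_sub_C_inv_mul_algebraMap α) (fun α _ _ => hdeg _ α) (fun α _ _ => by simp)
    (by simpa using h)
  exact ⟨hq, fun α hα j hj => by simpa using congrFun (hc α hα) ⟨j, hj⟩⟩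

lemma sum_smul_partialFractionBasis [DecidableEq K] (s : Finset (ℕ ⊕ K × ℕ))
    (g : ℕ ⊕ K × ℕ → K) :
    ∑ i ∈ s, g i • partialFractionBasis i =
      algebraMap K[X] (RatFunc K) (∑ n ∈ s.toLeft, monomial n (g (.inl n))) +
        ∑ α ∈ s.toRight.image Prod.fst, ∑ j ∈ Finset.range (s.toRight.sup Prod.snd + 1),
          C (if (α, j) ∈ s.toRight then g (.inr (α, j)) else 0) * (X - C α)⁻¹ ^ (j + 1) := by
  have hsub : s.toRight ⊆ s.toRight.image Prod.fst ×ˢ Finset.range (s.toRight.sup Prod.snd + 1) :=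
    fun p hp => Finset.mem_product.mpr
      ⟨Finset.mem_image_of_mem _ hp, Finset.mem_range_succ_iff.mpr (Finset.le_sup hp)⟩
  rw [← Finset.toLeft_disjSum_toRight (u := s), Finset.sum_disjSum, Finset.toLeft_disjSum,
    Finset.toRight_disjSum, ← Finset.sum_product']
  congr 1
  · simp [map_sum, smul_eq_C_mul, partialFractionBasis, ← C_mul_X_pow_eq_monomial]
  · simp only [apply_ite C, map_zero, ite_mul, zero_mul]
    rw [Finset.sum_ite_mem, Finset.inter_eq_right.mpr hsub]
    simp [smul_eq_C_mul, partialFractionBasis]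

theorem linearIndependent_partialFractionBasis :
    LinearIndependent K (partialFractionBasis (K := K)) := by
  classical
  refine linearIndependent_iff'.mpr fun s g hg => ?_
  rw [sum_smul_partialFractionBasis] at hg
  obtain ⟨hq, hc⟩ := eq_zero_of_algebraMap_add_sum_C_mul_inv_pow_eq_zero hg
  rintro (n | p) hi
  · simpa [finsetSum_coeff, coeff_monomial, Finset.mem_toLeft.mpr hi] using
      congr_arg (coeff · n) hq
  · have hp := Finset.mem_toRight.mpr hi
    simpa [hp] using hc p.1 (Finset.mem_image_of_mem _ hp) p.2
      (Nat.lt_succ_of_le (Finset.le_sup (f := Prod.snd) hp))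

lemma algebraMap_mem_span_partialFractionBasis (p : K[X]) :
    algebraMap K[X] (RatFunc K) p ∈ Submodule.span K (Set.range (partialFractionBasis (K := K))) := by
  rw [p.as_sum_range_C_mul_X_pow, map_sum]
  refine Submodule.sum_mem _ fun n _ => ?_
  rw [map_mul, algebraMap_C, map_pow, algebraMap_X, ← smul_eq_C_mul]
  exact Submodule.smul_mem _ _ (Submodule.subset_span ⟨.inl n, rfl⟩)

lemma inv_algebraMap_eq_prod_X_sub_C_inv_pow [IsAlgClosed K] [DecidableEq K] {p : K[X]}
    (hp : p.Monic) :
    (algebraMap K[X] (RatFunc K) p)⁻¹ = ∏ α ∈ p.roots.toFinset, (X - C α)⁻¹ ^ p.roots.count α := by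
  conv_lhs => rw [← prod_multiset_X_sub_C_of_monic_of_roots_card_eq hp
    IsAlgClosed.card_roots_eq_natDegree, Finset.prod_multiset_map_count]
  simp [map_prod, algebraMap_X_sub_C, inv_pow]

theorem span_partialFractionBasis [IsAlgClosed K] :
    Submodule.span K (Set.range (partialFractionBasis (K := K))) = ⊤ := by
  classical
  refine eq_top_iff.mpr fun f _ => ?_
  obtain ⟨q, r, hr, hf⟩ := mul_prod_pow_inverse_eq_quo_add_sum_rem_mul_pow_inverse f.num
    (fun α _ => monic_X_sub_C α) ((pairwise_coprime_X_sub_C Function.injective_id).set_pairwise _)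
    (fun α => f.denom.roots.count α) (fun α _ => X_sub_C_inv_mul_algebraMap α)
  rw [← num_div_denom f, div_eq_mul_inv, inv_algebraMap_eq_prod_X_sub_C_inv_pow (monic_denom f),
    hf]
  refine add_mem (algebraMap_mem_span_partialFractionBasis q)
    (Submodule.sum_mem _ fun α hα => Submodule.sum_mem _ fun j _ => ?_)
  have hrj : (r α j).degree ≤ 0 :=
    Nat.WithBot.lt_one_iff_le_zero.mp ((hr α hα j).trans_eq (degree_X_sub_C α))
  rw [eq_C_of_degree_le_zero hrj, algebraMap_C, ← smul_eq_C_mul]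
  exact Submodule.smul_mem _ _ (Submodule.subset_span ⟨.inr (α, j), rfl⟩)

section Derivation

variable (D : Derivation K (RatFunc K) (RatFunc K))

lemma derivation_C (a : K) : D (C a) = 0 := by
  rw [← algebraMap_eq_C, D.map_algebraMap]

lemma derivation_X_pow_succ (hD : D X = 1) (n : ℕ) : D (X ^ (n + 1)) = (n + 1 : K) • X ^ n := by
  rw [D.leibniz_pow, hD, Nat.add_sub_cancel, smul_eq_mul, mul_one, ← Nat.cast_smul_eq_nsmul K]
  push_cast
  rfl

lemma derivation_X_sub_C_inv_pow_succ (hD : D X = 1) (α : K) (k : ℕ) :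
    D ((X - C α)⁻¹ ^ (k + 1)) = -(k + 1 : K) • (X - C α)⁻¹ ^ (k + 2) := by
  rw [D.leibniz_pow, D.leibniz_inv, map_sub, hD, derivation_C, sub_zero, Nat.add_sub_cancel,
    ← Nat.cast_smul_eq_nsmul K, smul_eq_mul, smul_eq_mul, mul_one, mul_neg, ← pow_add, smul_neg,
    ← neg_smul]
  push_cast
  rfl

lemma derivation_partialFractionBasis_mem_span (hD : D X = 1) (i : ℕ ⊕ K × ℕ) :
    D (partialFractionBasis i) ∈ Submodule.span K (partialFractionBasis '' simplePoleIndicesᶜ) := by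
  have hmem (j : ℕ ⊕ K × ℕ) (hj : j ∉ simplePoleIndices) (c : K) :
      c • partialFractionBasis j ∈ Submodule.span K (partialFractionBasis '' simplePoleIndicesᶜ) :=
    Submodule.smul_mem _ _ (Submodule.subset_span ⟨j, hj, rfl⟩)
  rcases i with (_ | n) | ⟨α, k⟩
  · simp [partialFractionBasis]
  · rw [partialFractionBasis, derivation_X_pow_succ D hD]
    exact hmem (.inl n) (by simp [simplePoleIndices]) _
  · rw [partialFractionBasis, derivation_X_sub_C_inv_pow_succ D hD]
    exact hmem (.inr (α, k + 1)) (by simp [simplePoleIndices]) _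

lemma partialFractionBasis_mem_range_derivation [CharZero K] (hD : D X = 1) {i : ℕ ⊕ K × ℕ}
    (hi : i ∉ simplePoleIndices) : partialFractionBasis i ∈ LinearMap.range D.toLinearMap := by
  rcases i with n | ⟨α, _ | k⟩
  · refine ⟨(n + 1 : K)⁻¹ • X ^ (n + 1), ?_⟩
    simp [derivation_X_pow_succ D hD, partialFractionBasis, smul_smul, Nat.cast_add_one_ne_zero]
  · exact absurd ⟨α, rfl⟩ hi
  · refine ⟨-(k + 1 : K)⁻¹ • (X - C α)⁻¹ ^ (k + 1), ?_⟩
    change D _ = _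
    rw [D.map_smul, derivation_X_sub_C_inv_pow_succ D hD, smul_smul, neg_mul_neg,
      inv_mul_cancel₀ (Nat.cast_add_one_ne_zero k), one_smul]
    rfl

theorem range_derivation_eq_span [IsAlgClosed K] [CharZero K] (hD : D X = 1) :
    LinearMap.range D.toLinearMap =
      Submodule.span K (partialFractionBasis '' simplePoleIndicesᶜ) := by
  refine le_antisymm ?_ (Submodule.span_le.mpr ?_)
  · rw [LinearMap.range_eq_map, ← span_partialFractionBasis, Submodule.map_span_le]
    rintro _ ⟨i, rfl⟩
    exact derivation_partialFractionBasis_mem_span D hD i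
  · rintro _ ⟨i, hi, rfl⟩
    exact partialFractionBasis_mem_range_derivation D hD hi

end Derivation

end RatFunc

/-- for A = ℂ(x) with the ordinary derivative D₀ = d/dx (the
unique ℂ-derivation with D₀(x) = 1), one has ℂ(x) = im(D₀) ⊕ ℂ(x)_T as
ℂ-vector spaces, where ℂ(x)_T consists of the sums Σ γ_i/(x−α_i) with the α_i
distinct, i.e. ℂ(x)_T is the ℂ-span of the simple fractions 1/(x−α), α ∈ ℂ. -/
theorem ratfunc_decomposition_weight_zero
    (D : Derivation ℂ (RatFunc ℂ) (RatFunc ℂ)) (hD : D RatFunc.X = 1) :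
    IsCompl (LinearMap.range D.toLinearMap)
      (Submodule.span ℂ
        {f : RatFunc ℂ | ∃ α : ℂ, f = (RatFunc.X - RatFunc.C α)⁻¹}) := by
  rw [RatFunc.range_derivation_eq_span D hD, ← RatFunc.image_simplePoleIndices]
  exact RatFunc.linearIndependent_partialFractionBasis.isCompl_span_image
    RatFunc.span_partialFractionBasis isCompl_compl.symm
end
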